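/- Let r and q be real numbers with r ∉ {0,1} and q ≠ 0, and let F_{r,q}(x) = ((cosh(rx))^{q/r} − 1) / ((cosh x)^q − 1) for x > 0. If (r,q) belongs to {(u,v) : u < 0, v ≥ max(0, (2/3)(u+1))} \ {(−1,0)}, or {(u,v) : 0 < u < 1, v ≤ min(2u, (2/3)(u+1))} \ {(1/2,1)}, or {(u,v) : 1 < u, v ≥ max(2, (2/3)(u+1))} \ {(2,2)}, then F_{r,q} is strictly increasing on (0,+∞). -/

import Mathlib

/-- The function `F_{r,q}` defined on `(0,+∞)`. -/
noncomputable def Frq (r q : ℝ) (x : ℝ) : ℝ :=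
  ((Real.cosh (r * x)) ^ (q / r) - 1) / ((Real.cosh x) ^ q - 1)

/-!
Write `F_{r,q} = φ_r / φ_1` with `φ_r x = (cosh (r x) ^ (q / r) - 1) / q`, so that `φ_r 0 = 0` and
`φ_1' > 0`. By the monotone form of l'Hôpital's rule it suffices that `φ_r' / φ_1'` is strictly
increasing, and the numerator of the derivative of this quotient is a positive multiple of
`D (2 x)`, where `D x = (q - 2) sinh (r x) + (2 r - q) sinh x - q sinh ((r - 1) x)`.
The Taylor coefficients of `D` are `q (r ^ m + (1 - r) ^ m - 1) + 2 (r - r ^ m)` for odd `m`.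
On each region they are all nonnegative, and one of them is positive: for `m = 3` the coefficient is
`r (r - 1) (3 q - 2 (r + 1))`, and on the line `q = 2 (r + 1) / 3` the one for `m = 5` is
`(2 / 3) (r - 2) (r + 1) r (r - 1) (2 r - 1)`; the excluded points are the zeros of the latter.
-/

open Real Set

section QuotientMonotone

variable {f g f' g' : ℝ → ℝ} {a : ℝ}

theorem strictMonoOn_div_of_hasDerivAt
    (hf : ∀ x ∈ Ioi a, HasDerivAt f (f' x) x) (hg : ∀ x ∈ Ioi a, HasDerivAt g (g' x) x)
    (hg0 : ∀ x ∈ Ioi a, g x ≠ 0) (hpos : ∀ x ∈ Ioi a, 0 < f' x * g x - f x * g' x) :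
    StrictMonoOn (fun x => f x / g x) (Ioi a) := by
  have hderiv : ∀ x ∈ Ioi a,
      HasDerivAt (fun x => f x / g x) ((f' x * g x - f x * g' x) / g x ^ 2) x :=
    fun x hx => (hf x hx).div (hg x hx) (hg0 x hx)
  refine strictMonoOn_of_deriv_pos (convex_Ioi a)
    (fun x hx => (hderiv x hx).continuousAt.continuousWithinAt) fun x hx => ?_
  rw [interior_Ioi] at hx
  rw [(hderiv x hx).deriv]
  exact div_pos (hpos x hx) (pow_two_pos_of_ne_zero (hg0 x hx))

/-- Monotone form of l'Hôpital's rule. -/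
theorem StrictMonoOn.div_of_deriv_div (hmono : StrictMonoOn (fun x => f' x / g' x) (Ioi a))
    (hfc : ContinuousOn f (Ici a)) (hgc : ContinuousOn g (Ici a))
    (hf : ∀ x ∈ Ioi a, HasDerivAt f (f' x) x) (hg : ∀ x ∈ Ioi a, HasDerivAt g (g' x) x)
    (hfa : f a = 0) (hga : g a = 0) (hg' : ∀ x ∈ Ioi a, 0 < g' x) :
    StrictMonoOn (fun x => f x / g x) (Ioi a) := by
  have hg_pos : ∀ x ∈ Ioi a, 0 < g x := by
    have hg_mono : StrictMonoOn g (Ici a) := strictMonoOn_of_deriv_pos (convex_Ici a) hgc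
      (by simpa only [interior_Ici] using fun x hx => (hg x hx).deriv ▸ hg' x hx)
    intro x hx
    simpa only [hga] using hg_mono self_mem_Ici (mem_Ici_of_Ioi hx) hx
  refine strictMonoOn_div_of_hasDerivAt hf hg (fun x hx => (hg_pos x hx).ne') fun x hx => ?_
  obtain ⟨c, ⟨hac, hcx⟩, hcauchy⟩ := exists_ratio_hasDerivAt_eq_ratio_slope f f' hx
    (hfc.mono Icc_subset_Ici_self) (fun y hy => hf y hy.1)
    g g' (hgc.mono Icc_subset_Ici_self) (fun y hy => hg y hy.1)
  rw [hfa, hga, sub_zero, sub_zero] at hcauchy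
  have hlt := hmono hac hx hcx
  rw [div_lt_div_iff₀ (hg' c hac) (hg' x hx)] at hlt
  have key : (f' x * g x - f x * g' x) * g' c = g x * (f' x * g' c - f' c * g' x) := by
    linear_combination (g' x) * hcauchy
  refine (mul_pos_iff_of_pos_right (hg' c hac)).mp ?_
  rw [key]
  exact mul_pos (hg_pos x hx) (by linarith)

end QuotientMonotone

lemma mul_sub_pow_nonneg {a s t : ℝ} (hs : 0 ≤ s) (ht : 0 ≤ t) (h : 0 ≤ a * (s - t)) (n : ℕ) :
    0 ≤ a * (s ^ n - t ^ n) := by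
  rcases lt_trichotomy s t with hst | rfl | hst
  · have ha : a ≤ 0 := nonpos_of_mul_nonneg_left h (sub_neg.mpr hst)
    exact mul_nonneg_of_nonpos_of_nonpos ha (sub_nonpos.mpr (pow_le_pow_left₀ hs hst.le n))
  · simp
  · have ha : 0 ≤ a := nonneg_of_mul_nonneg_left h (sub_pos.mpr hst)
    exact mul_nonneg ha (sub_nonneg.mpr (pow_le_pow_left₀ ht hst.le n))

namespace Frq

def MonotoneRegion (r q : ℝ) : Prop :=
  (r < 0 ∧ max 0 (2 / 3 * (r + 1)) ≤ q ∧ ¬(r = -1 ∧ q = 0)) ∨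
    (0 < r ∧ r < 1 ∧ q ≤ min (2 * r) (2 / 3 * (r + 1)) ∧ ¬(r = 1 / 2 ∧ q = 1)) ∨
    (1 < r ∧ max 2 (2 / 3 * (r + 1)) ≤ q ∧ ¬(r = 2 ∧ q = 2))

noncomputable def sinhComb (r q x : ℝ) : ℝ :=
  (q - 2) * sinh (r * x) + (2 * r - q) * sinh x - q * sinh ((r - 1) * x)

def powDefect (r : ℝ) (n : ℕ) : ℝ := r ^ (2 * n + 1) + (1 - r) ^ (2 * n + 1) - 1

def sinhCoeff (r q : ℝ) (n : ℕ) : ℝ := q * powDefect r n + 2 * (r - r ^ (2 * n + 1))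

lemma hasSum_sinhComb (r q x : ℝ) :
    HasSum (fun n : ℕ => sinhCoeff r q n * x ^ (2 * n + 1) / (2 * n + 1).factorial)
      (sinhComb r q x) := by
  have hsum := (((hasSum_sinh (r * x)).mul_left (q - 2)).add
    ((hasSum_sinh x).mul_left (2 * r - q))).sub ((hasSum_sinh ((r - 1) * x)).mul_left q)
  refine hsum.congr_fun fun n => ?_
  have hodd : (r - 1) ^ (2 * n + 1) = -(1 - r) ^ (2 * n + 1) := by
    rw [← Odd.neg_pow ⟨n, rfl⟩, neg_sub]
  rw [sinhCoeff, powDefect, mul_pow, mul_pow, hodd]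
  ring

lemma sinhComb_pos {r q x : ℝ} (hc : ∀ n, 0 ≤ sinhCoeff r q n) {N : ℕ} (hN : 0 < sinhCoeff r q N)
    (hx : 0 < x) : 0 < sinhComb r q x := by
  have hs := hasSum_sinhComb r q x
  rw [← hs.tsum_eq]
  exact hs.summable.tsum_pos (fun n => by have := hc n; positivity) N (by positivity)

lemma sinhCoeff_eq_add (r q κ : ℝ) (n : ℕ) :
    sinhCoeff r q n = (q - κ) * powDefect r n + sinhCoeff r κ n := by
  rw [sinhCoeff, sinhCoeff]; ring

lemma powDefect_nonneg_of_nonpos {r : ℝ} (hr : r ≤ 0) (n : ℕ) : 0 ≤ powDefect r n := by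
  have h := pow_add_pow_le (neg_nonneg.mpr hr) zero_le_one (by omega : 2 * n + 1 ≠ 0)
  rw [Odd.neg_pow ⟨n, rfl⟩, one_pow, neg_add_eq_sub, neg_add_eq_sub] at h
  rw [powDefect]; linarith

lemma powDefect_nonneg_of_one_le {r : ℝ} (hr : 1 ≤ r) (n : ℕ) : 0 ≤ powDefect r n := by
  have h := pow_add_pow_le (sub_nonneg.mpr hr) zero_le_one (by omega : 2 * n + 1 ≠ 0)
  rw [one_pow, sub_add_cancel] at h
  rw [powDefect, ← neg_sub r, Odd.neg_pow ⟨n, rfl⟩]; linarith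

lemma powDefect_nonpos {r : ℝ} (h0 : 0 ≤ r) (h1 : r ≤ 1) (n : ℕ) : powDefect r n ≤ 0 := by
  have hr := pow_le_of_le_one h0 h1 (by omega : 2 * n + 1 ≠ 0)
  have hr' := pow_le_of_le_one (sub_nonneg.mpr h1) (sub_le_self 1 h0) (by omega : 2 * n + 1 ≠ 0)
  rw [powDefect]; linarith

lemma sinhCoeff_two_mul_nonneg {r : ℝ} (h0 : 0 ≤ r) (h1 : r ≤ 1 / 2) (n : ℕ) :
    0 ≤ sinhCoeff r (2 * r) n := by
  have hsign : 0 ≤ 2 * r * (1 - r) * ((1 - r) ^ 2 - r ^ 2) := by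
    nlinarith [mul_nonneg (mul_nonneg h0 (by linarith : 0 ≤ 1 - r)) (by linarith : 0 ≤ 1 - 2 * r)]
  have h := mul_sub_pow_nonneg (sq_nonneg (1 - r)) (sq_nonneg r) hsign n
  rw [← pow_mul, ← pow_mul] at h
  calc (0 : ℝ) ≤ _ := h
    _ = _ := by rw [sinhCoeff, powDefect, pow_succ, pow_succ (1 - r)]; ring

lemma sinhCoeff_two_nonneg {r : ℝ} (h1 : 1 ≤ r) (h2 : r ≤ 2) (n : ℕ) :
    0 ≤ sinhCoeff r 2 n := by
  have h := pow_le_of_le_one (sub_nonneg.mpr h1) (by linarith) (by omega : 2 * n + 1 ≠ 0)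
  rw [sinhCoeff, powDefect, ← neg_sub r, Odd.neg_pow ⟨n, rfl⟩]; linarith

/-- Along `q = 2 / 3 * (r + 1)`, consecutive coefficients differ by
`2 / 3 * (r - 2) * (r + 1) * r * (r - 1) * ((r ^ 2) ^ n - ((1 - r) ^ 2) ^ n)`, which has the sign
of the polynomial in the hypothesis since `r ^ 2 - (1 - r) ^ 2 = 2 * r - 1`. -/
lemma sinhCoeff_boundary_nonneg {r : ℝ} (hr : 0 ≤ (r - 2) * (r + 1) * r * (r - 1) * (2 * r - 1))
    (n : ℕ) : 0 ≤ sinhCoeff r (2 / 3 * (r + 1)) n := by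
  induction n with
  | zero => simp [sinhCoeff, powDefect]
  | succ n ih =>
    have h := mul_sub_pow_nonneg (a := 2 / 3 * ((r - 2) * (r + 1) * r * (r - 1)))
      (sq_nonneg r) (sq_nonneg (1 - r)) (by linarith) n
    rw [← pow_mul, ← pow_mul] at h
    calc (0 : ℝ) ≤ _ := add_nonneg ih h
      _ = _ := by
        rw [sinhCoeff, sinhCoeff, powDefect, powDefect,
          show 2 * (n + 1) + 1 = 2 * n + 1 + 2 by ring]
        simp only [pow_add, pow_one]
        ring

lemma sinhCoeff_nonneg_of_neg {r q : ℝ} (hr : r < 0) (hq0 : 0 ≤ q) (hq : 2 / 3 * (r + 1) ≤ q)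
    (n : ℕ) : 0 ≤ sinhCoeff r q n := by
  have hP := powDefect_nonneg_of_nonpos hr.le n
  rcases le_total r (-1) with hr1 | hr1
  · have hpow : r ^ (2 * n + 1) ≤ r := by
      have := le_self_pow₀ (by linarith : (1 : ℝ) ≤ -r) (by omega : 2 * n + 1 ≠ 0)
      rw [Odd.neg_pow ⟨n, rfl⟩] at this; linarith
    rw [sinhCoeff_eq_add r q 0 n]
    exact add_nonneg (mul_nonneg (by linarith) hP) (by rw [sinhCoeff]; linarith)
  · have hπ : 0 ≤ (r - 2) * (r + 1) * r * (r - 1) * (2 * r - 1) := by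
      nlinarith [mul_nonneg (mul_nonneg (by linarith : (0 : ℝ) ≤ 2 - r) (by linarith : 0 ≤ r + 1))
        (mul_nonneg (mul_nonneg (by linarith : (0 : ℝ) ≤ -r) (by linarith : 0 ≤ 1 - r))
          (by linarith : (0 : ℝ) ≤ 1 - 2 * r))]
    rw [sinhCoeff_eq_add r q (2 / 3 * (r + 1)) n]
    exact add_nonneg (mul_nonneg (by linarith) hP) (sinhCoeff_boundary_nonneg hπ n)

lemma sinhCoeff_nonneg_of_pos_of_lt_one {r q : ℝ} (h0 : 0 < r) (h1 : r < 1) (hq : q ≤ 2 * r)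
    (hq' : q ≤ 2 / 3 * (r + 1)) (n : ℕ) : 0 ≤ sinhCoeff r q n := by
  have hP := powDefect_nonpos h0.le h1.le n
  rcases le_total r (1 / 2) with hr | hr
  · rw [sinhCoeff_eq_add r q (2 * r) n]
    exact add_nonneg (mul_nonneg_of_nonpos_of_nonpos (by linarith) hP)
      (sinhCoeff_two_mul_nonneg h0.le hr n)
  · have hπ : 0 ≤ (r - 2) * (r + 1) * r * (r - 1) * (2 * r - 1) := by
      nlinarith [mul_nonneg (mul_nonneg (by linarith : (0 : ℝ) ≤ 2 - r) (by linarith : 0 ≤ r + 1))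
        (mul_nonneg (mul_nonneg h0.le (by linarith : 0 ≤ 1 - r))
          (by linarith : (0 : ℝ) ≤ 2 * r - 1))]
    rw [sinhCoeff_eq_add r q (2 / 3 * (r + 1)) n]
    exact add_nonneg (mul_nonneg_of_nonpos_of_nonpos (by linarith) hP)
      (sinhCoeff_boundary_nonneg hπ n)

lemma sinhCoeff_nonneg_of_one_lt {r q : ℝ} (h1 : 1 < r) (hq : 2 ≤ q) (hq' : 2 / 3 * (r + 1) ≤ q)
    (n : ℕ) : 0 ≤ sinhCoeff r q n := by
  have hP := powDefect_nonneg_of_one_le h1.le n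
  rcases le_total r 2 with hr | hr
  · rw [sinhCoeff_eq_add r q 2 n]
    exact add_nonneg (mul_nonneg (by linarith) hP) (sinhCoeff_two_nonneg h1.le hr n)
  · have hπ : 0 ≤ (r - 2) * (r + 1) * r * (r - 1) * (2 * r - 1) :=
      mul_nonneg (mul_nonneg (mul_nonneg (mul_nonneg (by linarith) (by linarith)) (by linarith))
        (by linarith)) (by linarith)
    rw [sinhCoeff_eq_add r q (2 / 3 * (r + 1)) n]
    exact add_nonneg (mul_nonneg (by linarith) hP) (sinhCoeff_boundary_nonneg hπ n)

lemma sinhCoeff_nonneg {r q : ℝ} (h : MonotoneRegion r q) (n : ℕ) : 0 ≤ sinhCoeff r q n := by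
  rcases h with ⟨hr, hq, -⟩ | ⟨h0, h1, hq, -⟩ | ⟨hr, hq, -⟩
  · exact sinhCoeff_nonneg_of_neg hr (le_of_max_le_left hq) (le_of_max_le_right hq) n
  · exact sinhCoeff_nonneg_of_pos_of_lt_one h0 h1 (le_min_iff.mp hq).1 (le_min_iff.mp hq).2 n
  · exact sinhCoeff_nonneg_of_one_lt hr (le_of_max_le_left hq) (le_of_max_le_right hq) n

lemma sinhCoeff_one (r q : ℝ) : sinhCoeff r q 1 = r * (r - 1) * (3 * q - 2 * (r + 1)) := by
  rw [sinhCoeff, powDefect]; ring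

lemma sinhCoeff_two_of_eq {r q : ℝ} (hq : q = 2 / 3 * (r + 1)) :
    sinhCoeff r q 2 = 2 / 3 * ((r - 2) * (r + 1) * r * (r - 1) * (2 * r - 1)) := by
  rw [sinhCoeff, powDefect, hq]; ring

lemma exists_sinhCoeff_pos {r q : ℝ} (hq : q ≠ 0) (h : MonotoneRegion r q) :
    ∃ N, 0 < sinhCoeff r q N := by
  by_cases hb : q = 2 / 3 * (r + 1)
  · refine ⟨2, ?_⟩
    rw [sinhCoeff_two_of_eq hb]
    rcases h with ⟨hr, hq', -⟩ | ⟨h0, h1, hq', hne⟩ | ⟨hr, hq', hne⟩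
    · have hr' : -1 < r := by
        have := lt_of_le_of_ne (le_of_max_le_left hq') (Ne.symm hq); linarith
      nlinarith [mul_pos (mul_pos (by linarith : (0 : ℝ) < 2 - r) (by linarith : 0 < r + 1))
        (mul_pos (mul_pos (by linarith : (0 : ℝ) < -r) (by linarith : 0 < 1 - r))
          (by linarith : (0 : ℝ) < 1 - 2 * r))]
    · have hr : 1 / 2 < r := by
        refine lt_of_le_of_ne (by linarith [(le_min_iff.mp hq').1]) fun h' => hne ⟨h'.symm, ?_⟩
        rw [hb, ← h']; norm_num
      nlinarith [mul_pos (mul_pos (by linarith : (0 : ℝ) < 2 - r) (by linarith : 0 < r + 1))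
        (mul_pos (mul_pos h0 (by linarith : 0 < 1 - r)) (by linarith : (0 : ℝ) < 2 * r - 1))]
    · have hr2 : 2 < r := by
        refine lt_of_le_of_ne (by linarith [le_of_max_le_left hq']) fun h' => hne ⟨h'.symm, ?_⟩
        rw [hb, ← h']; norm_num
      nlinarith [mul_pos (mul_pos (mul_pos (mul_pos (by linarith : (0 : ℝ) < r - 2)
        (by linarith : (0 : ℝ) < r + 1)) (by linarith : (0 : ℝ) < r))
        (by linarith : (0 : ℝ) < r - 1)) (by linarith : (0 : ℝ) < 2 * r - 1)]
  · refine ⟨1, ?_⟩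
    rw [sinhCoeff_one]
    rcases h with ⟨hr, hq', -⟩ | ⟨h0, h1, hq', -⟩ | ⟨hr, hq', -⟩
    · have := lt_of_le_of_ne (le_of_max_le_right hq') (Ne.symm hb)
      exact mul_pos (mul_pos_of_neg_of_neg hr (by linarith)) (by linarith)
    · have := lt_of_le_of_ne (le_min_iff.mp hq').2 hb
      exact mul_pos_of_neg_of_neg (mul_neg_of_pos_of_neg h0 (by linarith)) (by linarith)
    · have := lt_of_le_of_ne (le_of_max_le_right hq') (Ne.symm hb)
      exact mul_pos (mul_pos (by linarith) (by linarith)) (by linarith)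

noncomputable def coshPow (r q x : ℝ) : ℝ := (cosh (r * x) ^ (q / r) - 1) / q

noncomputable def coshPowDeriv (r q x : ℝ) : ℝ := cosh (r * x) ^ (q / r - 1) * sinh (r * x)

noncomputable def coshPowDeriv2 (r q x : ℝ) : ℝ :=
  cosh (r * x) ^ (q / r - 2) * ((q - r) * sinh (r * x) ^ 2 + r * cosh (r * x) ^ 2)

lemma hasDerivAt_cosh_mul_rpow (r p x : ℝ) :
    HasDerivAt (fun y => cosh (r * y) ^ p) (p * cosh (r * x) ^ (p - 1) * (sinh (r * x) * r)) x :=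
  (((hasDerivAt_id x).const_mul r).cosh.rpow_const (Or.inl (cosh_pos _).ne')).congr_deriv
    (by simp only [id, mul_one]; ring)

lemma hasDerivAt_coshPow {r q : ℝ} (hr : r ≠ 0) (hq : q ≠ 0) (x : ℝ) :
    HasDerivAt (coshPow r q) (coshPowDeriv r q x) x := by
  refine ((hasDerivAt_cosh_mul_rpow r (q / r) x).sub_const 1).div_const q |>.congr_deriv ?_
  rw [coshPowDeriv]
  field_simp

lemma hasDerivAt_coshPowDeriv {r : ℝ} (hr : r ≠ 0) (q x : ℝ) :
    HasDerivAt (coshPowDeriv r q) (coshPowDeriv2 r q x) x := by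
  have hs : HasDerivAt (fun y => sinh (r * y)) (cosh (r * x) * r) x := by
    simpa using ((hasDerivAt_id x).const_mul r).sinh
  refine ((hasDerivAt_cosh_mul_rpow r (q / r - 1) x).mul hs).congr_deriv ?_
  rw [coshPowDeriv2, show q / r - 1 - 1 = q / r - 2 by ring, show q / r - 1 = q / r - 2 + 1 by ring,
    rpow_add_one (cosh_pos _).ne']
  field_simp
  ring

lemma coshPowDeriv_one_pos (q : ℝ) {x : ℝ} (hx : 0 < x) : 0 < coshPowDeriv 1 q x := by
  rw [coshPowDeriv, one_mul]
  exact mul_pos (rpow_pos_of_pos (cosh_pos x) _) (sinh_pos_iff.mpr hx)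

lemma coshPowDeriv2_mul_sub (r q x : ℝ) :
    coshPowDeriv2 r q x * coshPowDeriv 1 q x - coshPowDeriv r q x * coshPowDeriv2 1 q x =
      cosh (r * x) ^ (q / r - 2) * cosh x ^ (q - 2) * (sinhComb r q (2 * x) / 4) := by
  simp only [coshPowDeriv2, coshPowDeriv, sinhComb, one_mul, div_one]
  rw [show r * (2 * x) = 2 * (r * x) by ring, show (r - 1) * (2 * x) = 2 * (r * x) - 2 * x by ring,
    sinh_sub, sinh_two_mul, sinh_two_mul, cosh_two_mul,
    cosh_two_mul, show q - 1 = q - 2 + 1 by ring, rpow_add_one (cosh_pos x).ne',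
    show q / r - 1 = q / r - 2 + 1 by ring, rpow_add_one (cosh_pos _).ne']
  linear_combination
    (cosh (r * x) ^ (q / r - 2) * cosh x ^ (q - 2) * ((r - q / 2) * sinh x * cosh x)) *
      cosh_sq (r * x) +
    (cosh (r * x) ^ (q / r - 2) * cosh x ^ (q - 2) * ((q / 2 - 1) * sinh (r * x) * cosh (r * x))) *
      cosh_sq x

lemma strictMonoOn_coshPowDeriv_div {r q : ℝ} (hr : r ≠ 0)
    (hD : ∀ x ∈ Ioi 0, 0 < sinhComb r q x) :
    StrictMonoOn (fun x => coshPowDeriv r q x / coshPowDeriv 1 q x) (Ioi 0) := by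
  refine strictMonoOn_div_of_hasDerivAt (fun x _ => hasDerivAt_coshPowDeriv hr q x)
    (fun x _ => hasDerivAt_coshPowDeriv one_ne_zero q x)
    (fun x hx => (coshPowDeriv_one_pos q hx).ne') fun x hx => ?_
  rw [coshPowDeriv2_mul_sub]
  have hD2 := hD (2 * x) (mul_pos two_pos (mem_Ioi.mp hx))
  exact mul_pos (mul_pos (rpow_pos_of_pos (cosh_pos _) _) (rpow_pos_of_pos (cosh_pos _) _))
    (div_pos hD2 four_pos)

end Frq

theorem Frq_strictMonoOn (r q : ℝ) (hq : q ≠ 0)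
    (h : (r < 0 ∧ max 0 (2 / 3 * (r + 1)) ≤ q ∧ ¬(r = -1 ∧ q = 0)) ∨
         (0 < r ∧ r < 1 ∧ q ≤ min (2 * r) (2 / 3 * (r + 1)) ∧ ¬(r = 1 / 2 ∧ q = 1)) ∨
         (1 < r ∧ max 2 (2 / 3 * (r + 1)) ≤ q ∧ ¬(r = 2 ∧ q = 2))) :
    StrictMonoOn (Frq r q) (Set.Ioi 0) := by
  have hr : r ≠ 0 := by
    rcases h with ⟨hr, -⟩ | ⟨hr, -⟩ | ⟨hr, -⟩
    exacts [hr.ne, hr.ne', (zero_lt_one.trans hr).ne']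
  obtain ⟨N, hN⟩ := Frq.exists_sinhCoeff_pos hq h
  have hD : ∀ x ∈ Ioi 0, 0 < Frq.sinhComb r q x :=
    fun x hx => Frq.sinhComb_pos (Frq.sinhCoeff_nonneg h) hN hx
  have hF : Frq r q = fun x => Frq.coshPow r q x / Frq.coshPow 1 q x := by
    funext x
    rw [Frq, Frq.coshPow, Frq.coshPow, one_mul, div_one, div_div_div_cancel_right₀ hq]
  have hderiv (s : ℝ) (hs : s ≠ 0) (x : ℝ) := Frq.hasDerivAt_coshPow hs hq x
  rw [hF]
  refine (Frq.strictMonoOn_coshPowDeriv_div hr hD).div_of_deriv_div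
    (fun x _ => (hderiv r hr x).continuousAt.continuousWithinAt)
    (fun x _ => (hderiv 1 one_ne_zero x).continuousAt.continuousWithinAt)
    (fun x _ => hderiv r hr x) (fun x _ => hderiv 1 one_ne_zero x) ?_ ?_
    fun x hx => Frq.coshPowDeriv_one_pos q hx
  all_goals simp [Frq.coshPow]
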